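/- arXiv:0812.0776 — 3 statements merged into one kernel-verified Lean document; each statement's English description precedes it below -/
import Mathlib

section
/- Let f₁ : [0,1] → ℝ be continuous and nonnegative with ∫₀¹ x f₁(x) dx = 1, and assume that every complex σ ≠ 1 with ∫₀¹ t^σ f₁(t) dt = 1 satisfies Re σ < 0 (Assumption 3). Then every complex σ with Re σ > −1, σ ≠ 0, and F₃(σ) = 1 satisfies Re σ < 0; i.e., σ = 0 is the element of Σ = {σ : Re σ > −1, F₃(σ) = 1} with the largest real part. -/
/-!
Write `G t = ∫₀ᵗ x f₁(x) dx`, so that `F₃(σ) = F₁(σ) - ∫₀¹ t^(σ-2) G(t) dt`. Integrating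
`d/dt (t^(σ-1) G(t)) = (σ-1) t^(σ-2) G(t) + t^σ f₁(t)` over `[0,1]` (the boundary term at `0`
vanishes because `G(t) = O(t²)` and `Re σ > -1`) gives `F₁(σ) + (σ-1) ∫₀¹ t^(σ-2) G = G(1) = 1`.
Hence `F₃(σ) = 1` forces `σ ∫₀¹ t^(σ-2) G = 0`, so for `σ ≠ 0` the integral vanishes and
`F₁(σ) = 1`. For `σ ≠ 1` Assumption 3 applies; `σ = 1` is impossible since `∫₀¹ G(t)/t dt > 0`
for the nonnegative continuous `G` with `G(1) = 1`.
-/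

open MeasureTheory Set Filter Topology intervalIntegral

/-- `∫₀¹ t^s g(t) dt`, so that `F₁ = unitMellin f₁` and `F₃ = unitMellin f₃`; note the exponent
`s`, where Mathlib's `mellin` has `s - 1`. -/
noncomputable def unitMellin (g : ℝ → ℝ) (s : ℂ) : ℂ :=
  ∫ t in (0 : ℝ)..1, (t : ℂ) ^ s * g t

noncomputable def momentPrimitive (f : ℝ → ℝ) (t : ℝ) : ℝ :=
  ∫ x in (0 : ℝ)..t, x * f x

section PowerBounds

theorem intervalIntegrable_of_norm_le_rpow {E : Type*} [NormedAddCommGroup E] {h : ℝ → E}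
    {K c : ℝ} (hc : -1 < c) (hm : AEStronglyMeasurable h (volume.restrict (Ioc 0 1)))
    (hb : ∀ t ∈ Ioc (0 : ℝ) 1, ‖h t‖ ≤ K * t ^ c) :
    IntervalIntegrable h volume 0 1 := by
  rw [intervalIntegrable_iff_integrableOn_Ioc_of_le zero_le_one]
  have hdom : IntegrableOn (fun t : ℝ => K * t ^ c) (Ioc 0 1) := by
    rw [← intervalIntegrable_iff_integrableOn_Ioc_of_le zero_le_one]
    exact (intervalIntegrable_rpow' hc).const_mul K
  refine hdom.mono' hm ?_
  exact (ae_restrict_iff' measurableSet_Ioc).2 (ae_of_all _ hb)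

variable {g : ℝ → ℝ} {K c : ℝ}

theorem norm_ofReal_cpow_mul_le {s : ℂ} {t : ℝ} (ht : 0 < t) (hb : |g t| ≤ K * t ^ c) :
    ‖(t : ℂ) ^ s * g t‖ ≤ K * t ^ (s.re + c) := by
  rw [norm_mul, Complex.norm_cpow_eq_rpow_re_of_pos ht, Complex.norm_real, Real.norm_eq_abs,
    Real.rpow_add ht]
  calc t ^ s.re * |g t| ≤ t ^ s.re * (K * t ^ c) := by gcongr
    _ = K * (t ^ s.re * t ^ c) := by ring

theorem intervalIntegrable_ofReal_cpow_mul {s : ℂ} (hg : ContinuousOn g (Ioc 0 1))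
    (hb : ∀ t ∈ Ioc (0 : ℝ) 1, |g t| ≤ K * t ^ c) (hs : -1 < s.re + c) :
    IntervalIntegrable (fun t : ℝ => (t : ℂ) ^ s * g t) volume 0 1 := by
  refine intervalIntegrable_of_norm_le_rpow hs ?_ fun t ht => norm_ofReal_cpow_mul_le ht.1 (hb t ht)
  refine ContinuousOn.aestronglyMeasurable ?_ measurableSet_Ioc
  refine ContinuousOn.mul (fun t ht => ?_) (Complex.continuous_ofReal.comp_continuousOn hg)
  exact ((continuousAt_cpow_const (Complex.ofReal_mem_slitPlane.2 ht.1)).comp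
    Complex.continuous_ofReal.continuousAt).continuousWithinAt

theorem intervalIntegrable_rpow_mul {s : ℝ} (hg : ContinuousOn g (Ioc 0 1))
    (hb : ∀ t ∈ Ioc (0 : ℝ) 1, |g t| ≤ K * t ^ c) (hs : -1 < s + c) :
    IntervalIntegrable (fun t : ℝ => t ^ s * g t) volume 0 1 := by
  refine intervalIntegrable_of_norm_le_rpow (K := K) hs ?_ fun t ht => ?_
  · refine ContinuousOn.aestronglyMeasurable ?_ measurableSet_Ioc
    exact (continuousOn_id.rpow_const fun t ht => Or.inl ht.1.ne').mul hg
  · rw [norm_mul, Real.norm_of_nonneg (Real.rpow_nonneg ht.1.le _), Real.norm_eq_abs,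
      Real.rpow_add ht.1]
    calc t ^ s * |g t| ≤ t ^ s * (K * t ^ c) :=
          mul_le_mul_of_nonneg_left (hb t ht) (Real.rpow_nonneg ht.1.le _)
      _ = K * (t ^ s * t ^ c) := by ring

theorem tendsto_ofReal_cpow_mul_nhdsGT_zero {s : ℂ}
    (hb : ∀ t ∈ Ioc (0 : ℝ) 1, |g t| ≤ K * t ^ c) (hs : 0 < s.re + c) :
    Tendsto (fun t : ℝ => (t : ℂ) ^ s * g t) (𝓝[>] 0) (𝓝 0) := by
  have hlim : Tendsto (fun t : ℝ => K * t ^ (s.re + c)) (𝓝[>] 0) (𝓝 0) := by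
    have := ((Real.continuousAt_rpow_const 0 _ (Or.inr hs.le)).tendsto.mono_left
      (nhdsWithin_le_nhds (s := Ioi 0))).const_mul K
    rwa [Real.zero_rpow hs.ne', mul_zero] at this
  refine squeeze_zero_norm' ?_ hlim
  filter_upwards [Ioc_mem_nhdsGT zero_lt_one] with t ht
  exact norm_ofReal_cpow_mul_le ht.1 (hb t ht)

theorem intervalIntegrable_ofReal_cpow_mul_of_continuousOn (hg : ContinuousOn g (Icc 0 1))
    {s : ℂ} (hs : -1 < s.re) :
    IntervalIntegrable (fun t : ℝ => (t : ℂ) ^ s * g t) volume 0 1 := by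
  obtain ⟨M, hM⟩ := isCompact_Icc.exists_bound_of_continuousOn hg
  refine intervalIntegrable_ofReal_cpow_mul (K := M) (c := 0) (hg.mono Ioc_subset_Icc_self)
    (fun t ht => ?_) (by rwa [add_zero])
  rw [Real.rpow_zero, mul_one]
  exact hM t (Ioc_subset_Icc_self ht)

theorem integral_rpow_mul_pos {s : ℝ} (hs : s ≤ 0) (hg : ContinuousOn g (Icc 0 1))
    (hnn : ∀ t ∈ Icc (0 : ℝ) 1, 0 ≤ g t) (hpos : ∃ c ∈ Icc (0 : ℝ) 1, 0 < g c)
    (hint : IntervalIntegrable (fun t : ℝ => t ^ s * g t) volume 0 1) :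
    0 < ∫ t in (0 : ℝ)..1, t ^ s * g t := by
  have hnn' : ∀ t ∈ Ioc (0 : ℝ) 1, 0 ≤ g t := fun t ht => hnn t (Ioc_subset_Icc_self ht)
  refine (integral_pos zero_lt_one hg hnn' hpos).trans_le ?_
  refine integral_mono_on_of_le_Ioo zero_le_one (hg.intervalIntegrable_of_Icc zero_le_one) hint
    fun t ht => le_mul_of_one_le_left (hnn t (Ioo_subset_Icc_self ht)) ?_
  exact Real.one_le_rpow_of_pos_of_le_one_of_nonpos ht.1 ht.2.le hs

end PowerBounds

section MomentPrimitive

variable {f : ℝ → ℝ}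

theorem momentPrimitive_zero : momentPrimitive f 0 = 0 := integral_same

theorem continuousOn_momentPrimitive (hf : ContinuousOn f (Icc 0 1)) :
    ContinuousOn (momentPrimitive f) (Icc 0 1) := by
  have hint : IntegrableOn (fun x => x * f x) (uIcc 0 1) := by
    rw [uIcc_of_le zero_le_one]
    exact (continuousOn_id.mul hf).integrableOn_Icc
  have h := continuousOn_primitive_interval hint
  rw [uIcc_of_le zero_le_one] at h
  exact h

theorem hasDerivAt_momentPrimitive (hf : ContinuousOn f (Icc 0 1)) {t : ℝ} (ht : t ∈ Ioo 0 1) :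
    HasDerivAt (momentPrimitive f) (t * f t) t := by
  have hcont : ContinuousOn (fun x => x * f x) (Icc 0 1) := continuousOn_id.mul hf
  have hmem : Icc (0 : ℝ) 1 ∈ 𝓝 t := Icc_mem_nhds ht.1 ht.2
  refine integral_hasDerivAt_right ?_ ?_ (hcont.continuousAt hmem)
  · exact (hcont.mono (Icc_subset_Icc_right ht.2.le)).intervalIntegrable_of_Icc ht.1.le
  · exact ⟨Icc 0 1, hmem, hcont.aestronglyMeasurable measurableSet_Icc⟩

theorem momentPrimitive_nonneg (hnn : ∀ x ∈ Icc (0 : ℝ) 1, 0 ≤ f x) {t : ℝ} (ht : t ∈ Icc 0 1) :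
    0 ≤ momentPrimitive f t :=
  integral_nonneg ht.1 fun x hx => mul_nonneg hx.1 (hnn x ⟨hx.1, hx.2.trans ht.2⟩)

theorem exists_abs_momentPrimitive_le (hf : ContinuousOn f (Icc 0 1)) :
    ∃ M, ∀ t ∈ Ioc (0 : ℝ) 1, |momentPrimitive f t| ≤ M * t ^ (2 : ℝ) := by
  obtain ⟨M, hM⟩ := isCompact_Icc.exists_bound_of_continuousOn hf
  refine ⟨M, fun t ht => ?_⟩
  have h := norm_integral_le_of_norm_le_const (a := 0) (b := t) (C := M * t)
    (f := fun x => x * f x) fun x hx => by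
      rw [uIoc_of_le ht.1.le] at hx
      rw [norm_mul, Real.norm_of_nonneg hx.1.le, mul_comm M]
      exact mul_le_mul hx.2 (hM x ⟨hx.1.le, hx.2.trans ht.2⟩) (norm_nonneg _) ht.1.le
  rwa [sub_zero, abs_of_pos ht.1, mul_assoc, ← sq, ← Real.rpow_two] at h

theorem intervalIntegrable_ofReal_cpow_sub_two_mul_momentPrimitive
    (hf : ContinuousOn f (Icc 0 1)) {s : ℂ} (hs : -1 < s.re) :
    IntervalIntegrable (fun t : ℝ => (t : ℂ) ^ (s - 2) * momentPrimitive f t) volume 0 1 := by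
  obtain ⟨M, hM⟩ := exists_abs_momentPrimitive_le hf
  refine intervalIntegrable_ofReal_cpow_mul
    ((continuousOn_momentPrimitive hf).mono Ioc_subset_Icc_self) hM ?_
  rw [Complex.sub_re, Complex.re_ofNat]
  linarith

theorem continuousOn_ofReal_cpow_sub_one_mul_momentPrimitive
    (hf : ContinuousOn f (Icc 0 1)) {s : ℂ} (hs : -1 < s.re) :
    ContinuousOn (fun t : ℝ => (t : ℂ) ^ (s - 1) * momentPrimitive f t) (Icc 0 1) := by
  intro t ht
  rcases ht.1.eq_or_lt with rfl | ht0
  · refine (continuousWithinAt_Ioi_iff_Ici.1 ?_).mono Icc_subset_Ici_self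
    obtain ⟨M, hM⟩ := exists_abs_momentPrimitive_le hf
    rw [ContinuousWithinAt, momentPrimitive_zero, Complex.ofReal_zero, mul_zero]
    refine tendsto_ofReal_cpow_mul_nhdsGT_zero hM ?_
    rw [Complex.sub_re, Complex.one_re]
    linarith
  · exact (((continuousAt_cpow_const (Complex.ofReal_mem_slitPlane.2 ht0)).comp
      Complex.continuous_ofReal.continuousAt).continuousWithinAt).mul
      (Complex.continuous_ofReal.comp_continuousOn (continuousOn_momentPrimitive hf) t ht)

theorem hasDerivAt_ofReal_cpow_sub_one_mul_momentPrimitive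
    (hf : ContinuousOn f (Icc 0 1)) (s : ℂ) {t : ℝ} (ht : t ∈ Ioo 0 1) :
    HasDerivAt (fun t : ℝ => (t : ℂ) ^ (s - 1) * momentPrimitive f t)
      ((s - 1) * ((t : ℂ) ^ (s - 2) * momentPrimitive f t) + (t : ℂ) ^ s * f t) t := by
  have ht0 : (t : ℂ) ≠ 0 := Complex.ofReal_ne_zero.2 ht.1.ne'
  have hpow : HasDerivAt (fun u : ℝ => (u : ℂ) ^ (s - 1)) ((s - 1) * (t : ℂ) ^ (s - 1 - 1)) t :=
    (Complex.hasStrictDerivAt_cpow_const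
      (Complex.ofReal_mem_slitPlane.2 ht.1)).hasDerivAt.comp_ofReal
  refine (hpow.mul (hasDerivAt_momentPrimitive hf ht).ofReal_comp).congr_deriv ?_
  rw [show s - 1 - 1 = s - 2 by ring, Complex.cpow_sub _ _ ht0, Complex.cpow_sub _ _ ht0,
    Complex.cpow_one, Complex.cpow_two]
  push_cast
  field_simp

end MomentPrimitive

theorem unitMellin_ofReal (g : ℝ → ℝ) (s : ℝ) :
    unitMellin g s = ↑(∫ t in (0 : ℝ)..1, t ^ s * g t) := by
  rw [unitMellin, ← intervalIntegral.integral_ofReal]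
  refine integral_congr_ae (ae_of_all _ fun t ht => ?_)
  rw [uIoc_of_le zero_le_one] at ht
  push_cast [Complex.ofReal_cpow ht.1.le]
  rfl

theorem unitMellin_sub_inv_sq_mul {f g : ℝ → ℝ} {s : ℂ}
    (hf : IntervalIntegrable (fun t : ℝ => (t : ℂ) ^ s * f t) volume 0 1)
    (hg : IntervalIntegrable (fun t : ℝ => (t : ℂ) ^ (s - 2) * g t) volume 0 1) :
    unitMellin (fun t => f t - 1 / t ^ 2 * g t) s = unitMellin f s - unitMellin g (s - 2) := by
  rw [unitMellin, unitMellin, unitMellin, ← integral_sub hf hg]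
  refine integral_congr_ae (ae_of_all _ fun t ht => ?_)
  rw [uIoc_of_le zero_le_one] at ht
  have ht0 : (t : ℂ) ≠ 0 := Complex.ofReal_ne_zero.2 ht.1.ne'
  rw [Complex.cpow_sub _ _ ht0, Complex.cpow_two]
  push_cast
  field_simp

theorem unitMellin_add_sub_one_mul_unitMellin_momentPrimitive {f : ℝ → ℝ}
    (hf : ContinuousOn f (Icc 0 1)) {s : ℂ} (hs : -1 < s.re) :
    unitMellin f s + (s - 1) * unitMellin (momentPrimitive f) (s - 2) = momentPrimitive f 1 := by
  have hint₁ := intervalIntegrable_ofReal_cpow_mul_of_continuousOn hf hs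
  have hint₂ := (intervalIntegrable_ofReal_cpow_sub_two_mul_momentPrimitive hf hs).const_mul (s - 1)
  have hFTC := integral_eq_sub_of_hasDerivAt_of_le zero_le_one
    (continuousOn_ofReal_cpow_sub_one_mul_momentPrimitive hf hs)
    (fun t ht => hasDerivAt_ofReal_cpow_sub_one_mul_momentPrimitive hf s ht) (hint₂.add hint₁)
  rw [integral_add hint₂ hint₁, intervalIntegral.integral_const_mul] at hFTC
  simpa [momentPrimitive_zero, unitMellin, add_comm] using hFTC

theorem unitMellin_momentPrimitive_neg_one_ne_zero {f : ℝ → ℝ} (hf : ContinuousOn f (Icc 0 1))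
    (hnn : ∀ x ∈ Icc (0 : ℝ) 1, 0 ≤ f x) (h1 : 0 < momentPrimitive f 1) :
    unitMellin (momentPrimitive f) (-1) ≠ 0 := by
  obtain ⟨M, hM⟩ := exists_abs_momentPrimitive_le hf
  have hGcont := continuousOn_momentPrimitive hf
  have hint : IntervalIntegrable (fun t : ℝ => t ^ (-1 : ℝ) * momentPrimitive f t) volume 0 1 :=
    intervalIntegrable_rpow_mul (hGcont.mono Ioc_subset_Icc_self) hM (by norm_num)
  have hpos := integral_rpow_mul_pos (by norm_num) hGcont
    (fun t ht => momentPrimitive_nonneg hnn ht) ⟨1, right_mem_Icc.2 zero_le_one, h1⟩ hint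
  rw [show (-1 : ℂ) = ((-1 : ℝ) : ℂ) by push_cast; rfl, unitMellin_ofReal]
  exact Complex.ofReal_ne_zero.2 hpos.ne'

theorem stmt11 (f₁ : ℝ → ℝ) (hf₁ : ContinuousOn f₁ (Set.Icc 0 1))
    (hnn : ∀ x ∈ Set.Icc (0:ℝ) 1, 0 ≤ f₁ x)
    (hnorm : ∫ x in (0:ℝ)..1, x * f₁ x = 1)
    (hassum3 : ∀ σ : ℂ, σ ≠ 1 → (∫ t in (0:ℝ)..1, (t : ℂ) ^ σ * (f₁ t : ℂ)) = 1 → σ.re < 0) :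
    ∀ σ : ℂ, -1 < σ.re → σ ≠ 0 →
      (∫ t in (0:ℝ)..1,
          (t : ℂ) ^ σ * ((f₁ t - (1 / t ^ 2) * ∫ x in (0:ℝ)..t, x * f₁ x : ℝ) : ℂ)) = 1 →
      σ.re < 0 := by
  intro σ hσ hσ0 hF₃
  have hG1 : momentPrimitive f₁ 1 = 1 := hnorm
  have hparts := unitMellin_add_sub_one_mul_unitMellin_momentPrimitive hf₁ hσ
  rw [hG1, Complex.ofReal_one] at hparts
  have hdiff : unitMellin f₁ σ - unitMellin (momentPrimitive f₁) (σ - 2) = 1 :=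
    (unitMellin_sub_inv_sq_mul (intervalIntegrable_ofReal_cpow_mul_of_continuousOn hf₁ hσ)
      (intervalIntegrable_ofReal_cpow_sub_two_mul_momentPrimitive hf₁ hσ)).symm.trans hF₃
  have hI₂ : unitMellin (momentPrimitive f₁) (σ - 2) = 0 :=
    (mul_eq_zero.1 (by linear_combination hparts - hdiff)).resolve_left hσ0
  have hF₁ : unitMellin f₁ σ = 1 := by linear_combination hdiff + hI₂
  rcases eq_or_ne σ 1 with rfl | hσ1
  · rw [show (1 : ℂ) - 2 = -1 by norm_num] at hI₂
    exact absurd hI₂ (unitMellin_momentPrimitive_neg_one_ne_zero hf₁ hnn (hG1.symm ▸ one_pos))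
  · exact hassum3 σ hσ1 hF₁
end

section
/- Let f₁ : [0,1] → ℝ be twice continuously differentiable, and set Σ' = {σ ∈ ℂ : Re σ > −1, σ ≠ 0, ∫₀¹ t^σ f₃(t) dt = 1}. If Σ' is nonempty, then it contains an element σ₁ of maximal real part, i.e., there exists σ₁ ∈ Σ' with Re σ ≤ Re σ₁ for all σ ∈ Σ'. -/
/-!
Write `F(σ) = ∫₀¹ t^σ f₃(t) dt`. Viewed as a Mellin transform of `f₃` cut off at `1`, `F` is
holomorphic on `Re σ > -1`, since `f₃` is bounded. If moreover `f₃'` is bounded on `(0, 1)`,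
integrating by parts gives `|σ + 1| |F(σ)| ≤ C`; for `f₃` this holds because
`2 ∫₀ᵗ x f₁ - t² f₁(t)` has derivative `-t² f₁'(t)` and is therefore `O(t³)`.
So `F = 1` only on a bounded set; in particular `F ≢ 1`, the solutions of `F = 1` do not
accumulate at `0`, and the nonzero solutions whose real part is at least that of a given one
form a compact set, on which `Re` attains its maximum.
-/

open MeasureTheory Set Filter Topology

noncomputable def unitMoment (g : ℝ → ℂ) (σ : ℂ) : ℂ := ∫ t in (0:ℝ)..1, (t : ℂ) ^ σ * g t

section UnitMoment

variable {g : ℝ → ℂ} {M : ℝ}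

theorem integrableOn_cpow_mul (hg : ContinuousOn g (Ioc 0 1))
    (hgM : ∀ t ∈ Ioc (0:ℝ) 1, ‖g t‖ ≤ M) {σ : ℂ} (hσ : -1 < σ.re) :
    IntegrableOn (fun t : ℝ => (t : ℂ) ^ σ * g t) (Ioc 0 1) := by
  have h := intervalIntegral.intervalIntegrable_cpow' (a := 0) (b := 1) hσ
  rw [intervalIntegrable_iff_integrableOn_Ioc_of_le zero_le_one] at h
  exact h.mul_bdd (hg.aestronglyMeasurable measurableSet_Ioc)
    ((ae_restrict_iff' measurableSet_Ioc).2 (.of_forall hgM))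

theorem unitMoment_eq_mellin (g : ℝ → ℂ) (σ : ℂ) :
    unitMoment g σ = mellin ((Ioc 0 1).indicator g) (σ + 1) := by
  rw [mellin, add_sub_cancel_right, unitMoment, intervalIntegral.integral_of_le zero_le_one,
    ← integral_indicator measurableSet_Ioc, ← integral_indicator measurableSet_Ioi]
  congr 1 with t
  by_cases ht : t ∈ Ioc (0:ℝ) 1
  · simp [ht, ht.1]
  · by_cases ht' : t ∈ Ioi (0:ℝ) <;> simp [ht, ht']

theorem analyticOnNhd_unitMoment (hg : ContinuousOn g (Ioc 0 1))
    (hgM : ∀ t ∈ Ioc (0:ℝ) 1, ‖g t‖ ≤ M) :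
    AnalyticOnNhd ℂ (unitMoment g) {σ | -1 < σ.re} := by
  refine DifferentiableOn.analyticOnNhd (fun σ hσ => ?_)
    (isOpen_lt continuous_const Complex.continuous_re)
  rw [funext (unitMoment_eq_mellin g)]
  refine (DifferentiableAt.comp (g := mellin _) (f := fun z : ℂ => z + 1) σ ?_
    (differentiableAt_id.add_const 1)).differentiableWithinAt
  apply mellin_differentiableAt_of_isBigO_rpow (a := σ.re + 2) (b := 0)
  · exact ((integrable_indicator_iff measurableSet_Ioc).2
      (IntegrableOn.of_bound measure_Ioc_lt_top
        (hg.aestronglyMeasurable measurableSet_Ioc) M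
        ((ae_restrict_iff' measurableSet_Ioc).2 (.of_forall hgM)))).integrableOn.locallyIntegrableOn
  · refine Asymptotics.isBigO_iff.2 ⟨0, ?_⟩
    filter_upwards [eventually_gt_atTop 1] with t ht
    simp [indicator_of_notMem (fun h : t ∈ Ioc 0 1 => ht.not_ge h.2)]
  · simp only [Complex.add_re, Complex.one_re]; linarith [show -1 < σ.re from hσ]
  · refine Asymptotics.isBigO_iff.2 ⟨M, .of_forall fun t => ?_⟩
    simp only [neg_zero, Real.rpow_zero, norm_one, mul_one, norm_indicator_eq_indicator_norm]
    exact indicator_le' hgM (fun _ _ => (norm_nonneg _).trans (hgM 1 ⟨one_pos, le_rfl⟩)) t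
  · simp only [Complex.add_re, Complex.one_re]; linarith [show -1 < σ.re from hσ]

theorem norm_ofReal_cpow_le_one {t : ℝ} (ht : t ∈ Ioc (0:ℝ) 1) {s : ℂ} (hs : 0 ≤ s.re) :
    ‖(t : ℂ) ^ s‖ ≤ 1 := by
  rw [Complex.norm_cpow_eq_rpow_re_of_pos ht.1]
  exact Real.rpow_le_one ht.1.le ht.2 hs

theorem tendsto_cpow_mul_nhdsGT_zero (hgM : ∀ t ∈ Ioc (0:ℝ) 1, ‖g t‖ ≤ M) {s : ℂ}
    (hs : 0 < s.re) : Tendsto (fun t : ℝ => (t : ℂ) ^ s * g t) (𝓝[>] 0) (𝓝 0) := by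
  have hpow := (Complex.continuousAt_ofReal_cpow_const 0 s (Or.inl hs)).tendsto
  rw [Complex.ofReal_zero, Complex.zero_cpow (fun h => by simp [h] at hs)] at hpow
  exact (hpow.mono_left nhdsWithin_le_nhds).zero_mul_isBoundedUnder_le
    (isBoundedUnder_of_eventually_le (eventually_of_mem (Ioc_mem_nhdsGT zero_lt_one) hgM))

/-- Integration by parts against `t ^ (σ + 1)`, whose boundary term at `0` vanishes. -/
theorem add_one_mul_unitMoment_eq (hg : ContinuousOn g (Ioc 0 1))
    (hgM : ∀ t ∈ Ioc (0:ℝ) 1, ‖g t‖ ≤ M) (hd : DifferentiableOn ℝ g (Ioo 0 1)) {σ : ℂ}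
    (hσ : -1 < σ.re)
    (hint' : IntervalIntegrable (fun t : ℝ => (t : ℂ) ^ (σ + 1) * deriv g t) volume 0 1) :
    (σ + 1) * unitMoment g σ = g 1 - ∫ t in (0:ℝ)..1, (t : ℂ) ^ (σ + 1) * deriv g t := by
  have hs : 0 < (σ + 1).re := by simp only [Complex.add_re, Complex.one_re]; linarith
  have hs0 : σ + 1 ≠ 0 := fun h => by simp [h] at hs
  have hderiv : ∀ t ∈ Ioo (0:ℝ) 1, HasDerivAt (fun t : ℝ => (t : ℂ) ^ (σ + 1) * g t)
      ((σ + 1) * ((t : ℂ) ^ σ * g t) + (t : ℂ) ^ (σ + 1) * deriv g t) t := fun t ht => by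
    have h := (hasDerivAt_ofReal_cpow_const ht.1.ne' hs0).mul
      (hd.differentiableAt (Ioo_mem_nhds ht.1 ht.2)).hasDerivAt
    rw [add_sub_cancel_right, mul_assoc] at h
    exact h
  have hint : IntervalIntegrable (fun t : ℝ => (t : ℂ) ^ σ * g t) volume 0 1 :=
    (intervalIntegrable_iff_integrableOn_Ioc_of_le zero_le_one).2
      (integrableOn_cpow_mul hg hgM hσ)
  have hlim1 : Tendsto (fun t : ℝ => (t : ℂ) ^ (σ + 1) * g t) (𝓝[<] 1) (𝓝 (g 1)) := by
    have h := ((Complex.continuousAt_ofReal_cpow_const 1 (σ + 1)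
      (Or.inr one_ne_zero)).continuousWithinAt.mul (hg 1 ⟨one_pos, le_rfl⟩)).mono_of_mem_nhdsWithin
      (mem_of_superset (Ioo_mem_nhdsLT zero_lt_one) Ioo_subset_Ioc_self)
    simpa [Pi.mul_def] using h.tendsto
  have hFTC := intervalIntegral.integral_eq_sub_of_hasDerivAt_of_tendsto zero_lt_one hderiv
    ((hint.const_mul _).add hint') (tendsto_cpow_mul_nhdsGT_zero hgM hs) hlim1
  rw [intervalIntegral.integral_add (hint.const_mul _) hint', intervalIntegral.integral_const_mul,
    sub_zero, ← eq_sub_iff_add_eq] at hFTC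
  exact hFTC

theorem norm_add_one_mul_unitMoment_le (hg : ContinuousOn g (Ioc 0 1))
    (hgM : ∀ t ∈ Ioc (0:ℝ) 1, ‖g t‖ ≤ M) (hd : DifferentiableOn ℝ g (Ioo 0 1)) {M' : ℝ}
    (hgM' : ∀ t ∈ Ioo (0:ℝ) 1, ‖deriv g t‖ ≤ M') {σ : ℂ} (hσ : -1 < σ.re) :
    ‖σ + 1‖ * ‖unitMoment g σ‖ ≤ M + M' := by
  have hs : 0 ≤ (σ + 1).re := by simp only [Complex.add_re, Complex.one_re]; linarith
  have hbound : ∀ t ∈ Ioo (0:ℝ) 1, ‖(t : ℂ) ^ (σ + 1) * deriv g t‖ ≤ M' := fun t ht => by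
    rw [norm_mul]
    exact (mul_le_of_le_one_left (norm_nonneg _)
      (norm_ofReal_cpow_le_one (Ioo_subset_Ioc_self ht) hs)).trans (hgM' t ht)
  have hint' : IntervalIntegrable (fun t : ℝ => (t : ℂ) ^ (σ + 1) * deriv g t) volume 0 1 := by
    rw [intervalIntegrable_iff_integrableOn_Ioo_of_le zero_le_one]
    exact IntegrableOn.of_bound measure_Ioo_lt_top
      ((Complex.measurable_ofReal.pow_const _).mul (measurable_deriv g)).aestronglyMeasurable M'
      ((ae_restrict_iff' measurableSet_Ioo).2 (.of_forall hbound))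
  have hrest : ‖∫ t in (0:ℝ)..1, (t : ℂ) ^ (σ + 1) * deriv g t‖ ≤ M' := by
    refine (intervalIntegral.norm_integral_le_of_norm_le_const_ae (C := M') ?_).trans_eq (by simp)
    filter_upwards [volume.ae_ne 1] with t ht1 ht
    rw [uIoc_of_le zero_le_one] at ht
    exact hbound t ⟨ht.1, lt_of_le_of_ne ht.2 ht1⟩
  calc ‖σ + 1‖ * ‖unitMoment g σ‖
      = ‖g 1 - ∫ t in (0:ℝ)..1, (t : ℂ) ^ (σ + 1) * deriv g t‖ := by
        rw [← norm_mul, add_one_mul_unitMoment_eq hg hgM hd hσ hint']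
    _ ≤ ‖g 1‖ + ‖∫ t in (0:ℝ)..1, (t : ℂ) ^ (σ + 1) * deriv g t‖ := norm_sub_le _ _
    _ ≤ M + M' := add_le_add (hgM 1 ⟨one_pos, le_rfl⟩) hrest

theorem isBounded_setOf_unitMoment_eq (hg : ContinuousOn g (Ioc 0 1))
    (hgM : ∀ t ∈ Ioc (0:ℝ) 1, ‖g t‖ ≤ M) (hd : DifferentiableOn ℝ g (Ioo 0 1)) {M' : ℝ}
    (hgM' : ∀ t ∈ Ioo (0:ℝ) 1, ‖deriv g t‖ ≤ M') {c : ℂ} (hc : c ≠ 0) :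
    Bornology.IsBounded {σ : ℂ | -1 < σ.re ∧ unitMoment g σ = c} := by
  refine (Metric.isBounded_closedBall (x := -1) (r := (M + M') / ‖c‖)).subset
    fun σ ⟨hσ, hσc⟩ => ?_
  rw [Metric.mem_closedBall, dist_eq_norm, sub_neg_eq_add, le_div_iff₀ (norm_pos_iff.2 hc)]
  simpa [hσc] using norm_add_one_mul_unitMoment_le hg hgM hd hgM' hσ

end UnitMoment

theorem isCompact_setOf_ne_and_eq {X Y : Type*} [PseudoMetricSpace X] [ProperSpace X]
    [TopologicalSpace Y] [T1Space Y] {F : X → Y} {T : Set X} {x₀ : X} {c : Y}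
    (hT : IsClosed T) (hF : ContinuousOn F T) (hbdd : Bornology.IsBounded {x ∈ T | F x = c})
    (hx₀ : ∀ᶠ x in 𝓝[≠] x₀, F x ≠ c) :
    IsCompact {x ∈ T | x ≠ x₀ ∧ F x = c} := by
  obtain ⟨V, hV, hVo, hx₀V⟩ := eventually_nhds_iff.1 (eventually_nhdsWithin_iff.1 hx₀)
  have hfib : IsCompact {x ∈ T | F x = c} :=
    Metric.isCompact_of_isClosed_isBounded (hF.preimage_isClosed_of_isClosed hT isClosed_singleton)
      hbdd
  convert hfib.diff hVo using 1
  ext x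
  refine ⟨fun ⟨hxT, hx, hFx⟩ => ⟨⟨hxT, hFx⟩, fun hxV => hV x hxV hx hFx⟩,
    fun ⟨⟨hxT, hFx⟩, hxV⟩ => ⟨hxT, fun h => hxV (h ▸ hx₀V), hFx⟩⟩

theorem exists_forall_re_le_of_isBounded {F : ℂ → ℂ} {b : ℝ} {z₀ c : ℂ}
    (hF : AnalyticOnNhd ℂ F {z | b < z.re})
    (hbdd : Bornology.IsBounded {z : ℂ | b < z.re ∧ F z = c}) (hz₀ : b < z₀.re)
    (hne : {z : ℂ | b < z.re ∧ z ≠ z₀ ∧ F z = c}.Nonempty) :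
    ∃ z₁ ∈ {z : ℂ | b < z.re ∧ z ≠ z₀ ∧ F z = c},
      ∀ z ∈ {z : ℂ | b < z.re ∧ z ≠ z₀ ∧ F z = c}, z.re ≤ z₁.re := by
  obtain ⟨σ₀, hσ₀, hσ₀z₀, hFσ₀⟩ := hne
  have hnot_const : ¬ EqOn F (fun _ => c) {z | b < z.re} := by
    intro h
    obtain ⟨R, hR⟩ := hbdd.subset_closedBall 0
    set x : ℝ := max R b + 1
    have hx : b < (x : ℂ).re := by simp only [Complex.ofReal_re, x]; linarith [le_max_right R b]
    have hxR := hR ⟨hx, h hx⟩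
    simp only [Metric.mem_closedBall, dist_zero_right, Complex.norm_real, Real.norm_eq_abs] at hxR
    linarith [le_abs_self x, le_max_left R b]
  have hiso : ∀ᶠ z in 𝓝[≠] z₀, F z ≠ c := by
    by_contra h
    simp only [not_eventually, not_not] at h
    exact hnot_const (hF.eqOn_of_preconnected_of_frequently_eq analyticOnNhd_const
      (convex_halfSpace_re_gt b).isPreconnected hz₀ h)
  -- only the solutions with `σ₀.re ≤ re` compete, and they form a compact set
  have hT : {z : ℂ | σ₀.re ≤ z.re} ⊆ {z | b < z.re} := fun z hz => hσ₀.trans_le hz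
  have hK := isCompact_setOf_ne_and_eq (isClosed_le continuous_const Complex.continuous_re)
    (hF.continuousOn.mono hT) (hbdd.subset fun z hz => ⟨hT hz.1, hz.2⟩) hiso
  obtain ⟨z₁, ⟨hz₁, hz₁z₀, hFz₁⟩, hmax⟩ :=
    hK.exists_isMaxOn ⟨σ₀, le_refl σ₀.re, hσ₀z₀, hFσ₀⟩ Complex.continuous_re.continuousOn
  refine ⟨z₁, ⟨hσ₀.trans_le hz₁, hz₁z₀, hFz₁⟩, fun z ⟨_, hzz₀, hFz⟩ => ?_⟩
  rcases le_total σ₀.re z.re with h | h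
  · exact hmax ⟨h, hzz₀, hFz⟩
  · exact h.trans (hmax ⟨le_refl σ₀.re, hσ₀z₀, hFσ₀⟩)

/-- At `t = 0` the junk value `1 / 0 = 0` gives `f₃ f 0 = f 0`, not the limit `f 0 / 2`; only
the values on `(0, 1]` matter. -/
noncomputable def f₃ (f : ℝ → ℝ) (t : ℝ) : ℝ := f t - 1 / t ^ 2 * ∫ x in (0:ℝ)..t, x * f x

section F3

variable {f : ℝ → ℝ}

theorem abs_f₃_le {C : ℝ} (hC : ∀ t ∈ Icc (0:ℝ) 1, |f t| ≤ C) {t : ℝ} (ht : t ∈ Ioc (0:ℝ) 1) :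
    |f₃ f t| ≤ 2 * C := by
  have hI : ‖∫ x in (0:ℝ)..t, x * f x‖ ≤ C * t * |t - 0| := by
    refine intervalIntegral.norm_integral_le_of_norm_le_const fun x hx => ?_
    rw [uIoc_of_le ht.1.le] at hx
    have hfx := hC x ⟨hx.1.le, hx.2.trans ht.2⟩
    rw [Real.norm_eq_abs, abs_mul, abs_of_pos hx.1, mul_comm]
    exact mul_le_mul hfx hx.2 hx.1.le ((abs_nonneg _).trans hfx)
  rw [Real.norm_eq_abs, sub_zero, abs_of_pos ht.1] at hI
  have ht2 : 0 < t ^ 2 := pow_pos ht.1 2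
  calc |f₃ f t| ≤ |f t| + |1 / t ^ 2 * ∫ x in (0:ℝ)..t, x * f x| := abs_sub _ _
    _ ≤ C + C := by
      refine add_le_add (hC t ⟨ht.1.le, ht.2⟩) ?_
      rw [abs_mul, abs_of_pos (one_div_pos.2 ht2), one_div_mul_eq_div, div_le_iff₀ ht2]
      linarith
    _ = 2 * C := by ring

theorem continuousOn_integral_mul_self (hf : ContinuousOn f (Icc 0 1)) :
    ContinuousOn (fun t => ∫ x in (0:ℝ)..t, x * f x) (Icc 0 1) := by
  have h := intervalIntegral.continuousOn_primitive_interval (μ := volume) (a := 0) (b := 1)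
    (f := fun x => x * f x)
    (by rw [uIcc_of_le zero_le_one]; exact (continuousOn_id.mul hf).integrableOn_Icc)
  rwa [uIcc_of_le zero_le_one] at h

theorem hasDerivAt_integral_mul_self (hf : ContinuousOn f (Icc 0 1)) {t : ℝ}
    (ht : t ∈ Ioo (0:ℝ) 1) : HasDerivAt (fun t => ∫ x in (0:ℝ)..t, x * f x) (t * f t) t := by
  have hcont : ContinuousOn (fun x => x * f x) (Icc 0 1) := continuousOn_id.mul hf
  refine intervalIntegral.integral_hasDerivAt_right ?_
    ((hcont.mono Ioo_subset_Icc_self).stronglyMeasurableAtFilter isOpen_Ioo t ht)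
    (hcont.continuousAt (Icc_mem_nhds ht.1 ht.2))
  exact (hcont.mono (Icc_subset_Icc le_rfl ht.2.le)).intervalIntegrable_of_Icc ht.1.le

theorem continuousOn_f₃ (hf : ContinuousOn f (Icc 0 1)) : ContinuousOn (f₃ f) (Ioc 0 1) :=
  (hf.mono Ioc_subset_Icc_self).sub
    ((continuousOn_const.div (continuousOn_pow 2) fun _ ht => (pow_pos ht.1 2).ne').mul
      ((continuousOn_integral_mul_self hf).mono Ioc_subset_Icc_self))

theorem hasDerivAt_f₃ (hf : ContinuousOn f (Icc 0 1)) {t f' : ℝ} (ht : t ∈ Ioo (0:ℝ) 1)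
    (hf' : HasDerivAt f f' t) :
    HasDerivAt (f₃ f) (f' + (2 * (∫ x in (0:ℝ)..t, x * f x) - t ^ 2 * f t) / t ^ 3) t := by
  have h := hf'.sub (((hasDerivAt_pow 2 t).inv (pow_pos ht.1 2).ne').mul
    (hasDerivAt_integral_mul_self hf ht))
  unfold f₃
  simp only [one_div]
  refine h.congr_deriv ?_
  have ht0 : t ≠ 0 := ht.1.ne'
  simp only [Pi.inv_apply]
  field_simp
  ring

theorem abs_two_mul_integral_mul_self_sub_le (hf : ContinuousOn f (Icc 0 1))
    (hd : DifferentiableOn ℝ f (Ioo 0 1)) {C : ℝ} (hC : ∀ t ∈ Ioo (0:ℝ) 1, |deriv f t| ≤ C)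
    {t : ℝ} (ht : t ∈ Ioc (0:ℝ) 1) :
    |2 * (∫ x in (0:ℝ)..t, x * f x) - t ^ 2 * f t| ≤ C * t ^ 3 := by
  set h : ℝ → ℝ := fun t => 2 * (∫ x in (0:ℝ)..t, x * f x) - t ^ 2 * f t
  have hsub : Icc 0 t ⊆ Icc (0:ℝ) 1 := Icc_subset_Icc le_rfl ht.2
  have hcont : ContinuousOn h (Icc 0 t) :=
    (continuousOn_const.mul ((continuousOn_integral_mul_self hf).mono hsub)).sub
      ((continuousOn_pow 2).mul (hf.mono hsub))
  have hderiv : ∀ x ∈ Ioo 0 t, HasDerivAt h (-(x ^ 2 * deriv f x)) x := fun x hx => by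
    have hx1 : x ∈ Ioo (0:ℝ) 1 := ⟨hx.1, hx.2.trans_le ht.2⟩
    have H := ((hasDerivAt_integral_mul_self hf hx1).const_mul 2).sub
      ((hasDerivAt_pow 2 x).mul (hd.differentiableAt (Ioo_mem_nhds hx1.1 hx1.2)).hasDerivAt)
    refine H.congr_deriv ?_
    ring
  obtain ⟨c, hc, hslope⟩ := exists_hasDerivAt_eq_slope h _ ht.1 hcont hderiv
  have h0 : h 0 = 0 := by simp [h]
  rw [h0, sub_zero, sub_zero, eq_div_iff ht.1.ne'] at hslope
  change |h t| ≤ C * t ^ 3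
  rw [← hslope, abs_mul, abs_neg, abs_mul, abs_of_pos ht.1, abs_of_nonneg (sq_nonneg c)]
  calc c ^ 2 * |deriv f c| * t ≤ t ^ 2 * C * t := by
        refine mul_le_mul_of_nonneg_right (mul_le_mul (pow_le_pow_left₀ hc.1.le hc.2.le 2)
          (hC c ⟨hc.1, hc.2.trans_le ht.2⟩) (abs_nonneg _) (sq_nonneg t)) ht.1.le
    _ = C * t ^ 3 := by ring

theorem abs_deriv_f₃_le (hf : ContinuousOn f (Icc 0 1)) (hd : DifferentiableOn ℝ f (Ioo 0 1))
    {C : ℝ} (hC : ∀ t ∈ Ioo (0:ℝ) 1, |deriv f t| ≤ C) {t : ℝ} (ht : t ∈ Ioo (0:ℝ) 1) :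
    |deriv (f₃ f) t| ≤ 2 * C := by
  rw [(hasDerivAt_f₃ hf ht (hd.differentiableAt (Ioo_mem_nhds ht.1 ht.2)).hasDerivAt).deriv]
  have ht3 : 0 < t ^ 3 := pow_pos ht.1 3
  calc _ ≤ |deriv f t| + |(2 * (∫ x in (0:ℝ)..t, x * f x) - t ^ 2 * f t) / t ^ 3| := abs_add_le _ _
    _ ≤ C + C := by
      refine add_le_add (hC t ht) ?_
      rw [abs_div, abs_of_pos ht3, div_le_iff₀ ht3]
      exact abs_two_mul_integral_mul_self_sub_le hf hd hC (Ioo_subset_Ioc_self ht)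
    _ = 2 * C := by ring

end F3

theorem exists_abs_deriv_le_of_contDiffOn {f : ℝ → ℝ} {a b : ℝ} {n : WithTop ℕ∞}
    (hf : ContDiffOn ℝ n f (Icc a b)) (hn : n ≠ 0) : ∃ C, ∀ t ∈ Ioo a b, |deriv f t| ≤ C := by
  obtain ⟨K, hK⟩ := hf.exists_lipschitzOnWith hn (convex_Icc a b) isCompact_Icc
  exact ⟨K, fun t ht => norm_deriv_le_of_lipschitzOn (Icc_mem_nhds ht.1 ht.2) hK⟩

theorem stmt14 (f₁ : ℝ → ℝ) (hf₁ : ContDiffOn ℝ 2 f₁ (Set.Icc 0 1)) :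
    ({σ : ℂ | -1 < σ.re ∧ σ ≠ 0 ∧
        (∫ t in (0:ℝ)..1,
            (t : ℂ) ^ σ * ((f₁ t - (1 / t ^ 2) * ∫ x in (0:ℝ)..t, x * f₁ x : ℝ) : ℂ)) = 1}).Nonempty →
    ∃ σ₁ ∈ {σ : ℂ | -1 < σ.re ∧ σ ≠ 0 ∧
        (∫ t in (0:ℝ)..1,
            (t : ℂ) ^ σ * ((f₁ t - (1 / t ^ 2) * ∫ x in (0:ℝ)..t, x * f₁ x : ℝ) : ℂ)) = 1},
      ∀ σ ∈ {σ : ℂ | -1 < σ.re ∧ σ ≠ 0 ∧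
        (∫ t in (0:ℝ)..1,
            (t : ℂ) ^ σ * ((f₁ t - (1 / t ^ 2) * ∫ x in (0:ℝ)..t, x * f₁ x : ℝ) : ℂ)) = 1},
        σ.re ≤ σ₁.re := by
  intro hne
  have hc : ContinuousOn f₁ (Icc 0 1) := hf₁.continuousOn
  have hd : DifferentiableOn ℝ f₁ (Ioo 0 1) :=
    (hf₁.differentiableOn two_ne_zero).mono Ioo_subset_Icc_self
  obtain ⟨C, hC⟩ := isCompact_Icc.exists_bound_of_continuousOn hc
  obtain ⟨C₁, hC₁⟩ := exists_abs_deriv_le_of_contDiffOn hf₁ two_ne_zero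
  have hf₃' : ∀ t ∈ Ioo (0:ℝ) 1,
      HasDerivAt (fun t => (f₃ f₁ t : ℂ)) ((deriv (f₃ f₁) t : ℝ) : ℂ) t := fun t ht =>
    (hasDerivAt_f₃ hc ht (hd.differentiableAt (Ioo_mem_nhds ht.1 ht.2)).hasDerivAt
      ).differentiableAt.hasDerivAt.ofReal_comp
  have hg : ContinuousOn (fun t => (f₃ f₁ t : ℂ)) (Ioc 0 1) :=
    Complex.continuous_ofReal.comp_continuousOn (continuousOn_f₃ hc)
  have hgM : ∀ t ∈ Ioc (0:ℝ) 1, ‖(f₃ f₁ t : ℂ)‖ ≤ 2 * C := fun t ht => by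
    simpa using abs_f₃_le hC ht
  have hgd : DifferentiableOn ℝ (fun t => (f₃ f₁ t : ℂ)) (Ioo 0 1) := fun t ht =>
    (hf₃' t ht).differentiableAt.differentiableWithinAt
  have hgM' : ∀ t ∈ Ioo (0:ℝ) 1, ‖deriv (fun t => (f₃ f₁ t : ℂ)) t‖ ≤ 2 * C₁ := fun t ht => by
    simpa [(hf₃' t ht).deriv] using abs_deriv_f₃_le hc hd hC₁ ht
  exact exists_forall_re_le_of_isBounded (analyticOnNhd_unitMoment hg hgM)
    (isBounded_setOf_unitMoment_eq hg hgM hgd hgM' one_ne_zero) (by simp) hne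
end

section
/- Suppose f₁(x) = f(x) + f(1−x) is positive at every rational point of [0,1], and define a_p = Λ_p(1)^{-1/p}, so that Λ_p(a_p) = 1. If there are constants A > 0, B > 0, δ > 0 such that B ≤ a_p and |a_{p+1} − a_p| ≤ A/p^{2+δ} for all p ≥ 1, then the limit a_∞ = lim_{p→∞} a_p exists, a_∞ ≥ B > 0, and Λ_p(a_∞) → 1 as p → ∞; i.e., Λ_p(a_∞) is a separating solution. -/
/-! Induction gives `Λ_p(y) = y^p Λ_p(1)`, and `Λ_p(1) > 0` because symmetrising the recurrence
under `q ↦ p + 1 - q` replaces `f` by `f₁`; hence `Λ_p(y) = (y / a_p)^p`. Since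
`p |a_∞ - a_p| ≤ ∑_{k ≥ p} k |a_{k+1} - a_k|` is a tail of the convergent series
`∑ A k^{-1-δ}`, it tends to `0`, and then `(a_∞ / a_p)^p → 1` because it lies between
`1 + p t_p` and `exp (p t_p)`, where `t_p = a_∞ / a_p - 1`. -/

open Filter

/-- `Λ` is the family of sequences defined by the quadratic recurrence
`Λ_1(y) = y`, `Λ_{p+1}(y) = (1/p) ∑_{q=1}^p f(q/(p+1)) Λ_q(y) Λ_{p+1-q}(y)` for `p ≥ 1`. -/
def IsLamSeq (f : ℝ → ℝ) (Λ : ℝ → ℕ → ℝ) : Prop :=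
  (∀ y : ℝ, Λ y 1 = y) ∧
  ∀ y : ℝ, ∀ p : ℕ, 1 ≤ p →
    Λ y (p + 1) =
      (1 / (p : ℝ)) * ∑ q ∈ Finset.Icc 1 p,
        f ((q : ℝ) / ((p : ℝ) + 1)) * Λ y q * Λ y (p + 1 - q)

open Topology

theorem Finset.sum_Icc_one_reflect {M : Type*} [AddCommMonoid M] (g : ℕ → M) (p : ℕ) :
    ∑ q ∈ Finset.Icc 1 p, g (p + 1 - q) = ∑ q ∈ Finset.Icc 1 p, g q := by
  refine Finset.sum_nbij' (fun q => p + 1 - q) (fun q => p + 1 - q) ?_ ?_ ?_ ?_ ?_ <;>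
    intro q hq <;> simp only [Finset.mem_Icc] at hq ⊢ <;> omega

theorem exists_tendsto_and_tendsto_succ_mul_dist {α : Type*} [PseudoMetricSpace α]
    [CompleteSpace α] {u : ℕ → α} {d : ℕ → ℝ}
    (hu : ∀ n, dist (u n) (u (n + 1)) ≤ d n)
    (hd : Summable fun n : ℕ => ((n : ℝ) + 1) * d n) :
    ∃ L, Tendsto u atTop (𝓝 L) ∧
      Tendsto (fun n : ℕ => ((n : ℝ) + 1) * dist (u n) L) atTop (𝓝 0) := by
  have hd_nonneg n : 0 ≤ d n := dist_nonneg.trans (hu n)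
  have hd_summable : Summable d :=
    hd.of_nonneg_of_le hd_nonneg fun n => le_mul_of_one_le_left (hd_nonneg n) (by simp)
  obtain ⟨L, hL⟩ :=
    cauchySeq_tendsto_of_complete (cauchySeq_of_dist_le_of_summable d hu hd_summable)
  refine ⟨L, hL, squeeze_zero (fun n => by positivity) (fun n => ?_)
    (tendsto_sum_nat_add fun n : ℕ => ((n : ℝ) + 1) * d n)⟩
  have hshift : Summable fun k => d (k + n) := (summable_nat_add_iff n).2 hd_summable
  calc ((n : ℝ) + 1) * dist (u n) L
      ≤ ((n : ℝ) + 1) * ∑' k, d (k + n) := by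
        gcongr
        simpa only [add_comm] using dist_le_tsum_of_dist_le_of_tendsto d hu hd_summable hL n
    _ = ∑' k, ((n : ℝ) + 1) * d (k + n) := (tsum_mul_left).symm
    _ ≤ ∑' k, (((k + n : ℕ) : ℝ) + 1) * d (k + n) :=
        (hshift.mul_left _).tsum_le_tsum
          (fun k => by gcongr; exacts [hd_nonneg _, Nat.le_add_left n k])
          ((summable_nat_add_iff n).2 hd)

theorem tendsto_div_pow_of_tendsto_mul_dist {B c : ℝ} {x : ℕ → ℝ} {k : ℕ → ℕ}
    (hB : 0 < B) (hc : 0 ≤ c) (hx : ∀ n, B ≤ x n)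
    (h : Tendsto (fun n => (k n : ℝ) * dist (x n) c) atTop (𝓝 0)) :
    Tendsto (fun n => (c / x n) ^ k n) atTop (𝓝 1) := by
  set t : ℕ → ℝ := fun n => c / x n - 1
  have hx_pos n : 0 < x n := hB.trans_le (hx n)
  have ht : Tendsto (fun n => k n * t n) atTop (𝓝 0) := by
    refine squeeze_zero_norm (fun n => ?_) (by simpa using h.div_const B)
    have ht_eq : t n = (c - x n) / x n := by rw [sub_div, div_self (hx_pos n).ne']
    rw [ht_eq, Real.norm_eq_abs, abs_mul, Nat.abs_cast, abs_div, abs_of_pos (hx_pos n),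
      Real.dist_eq, abs_sub_comm, mul_div_assoc]
    gcongr
    exact hx n
  have hlow : Tendsto (fun n => 1 + k n * t n) atTop (𝓝 1) := by simpa using ht.const_add 1
  have hup : Tendsto (fun n => Real.exp (k n * t n)) atTop (𝓝 1) := by
    simpa [Function.comp_def] using (Real.continuous_exp.tendsto 0).comp ht
  have hbase n : c / x n = 1 + t n := by ring
  have hbase_nonneg n : 0 ≤ 1 + t n := hbase n ▸ div_nonneg hc (hx_pos n).le
  refine tendsto_of_tendsto_of_tendsto_of_le_of_le hlow hup (fun n => ?_) (fun n => ?_)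
  · rw [hbase]
    exact one_add_mul_le_pow (by linarith [hbase_nonneg n]) _
  · rw [Real.exp_nat_mul, hbase]
    exact pow_le_pow_left₀ (hbase_nonneg n) (by linarith [Real.add_one_le_exp (t n)]) _

namespace IsLamSeq

variable {f : ℝ → ℝ} {Λ : ℝ → ℕ → ℝ}

theorem apply_eq_pow_mul (hΛ : IsLamSeq f Λ) (y : ℝ) {p : ℕ} (hp : 1 ≤ p) :
    Λ y p = y ^ p * Λ 1 p := by
  induction p using Nat.strong_induction_on with
  | _ p ih =>
  obtain rfl | ⟨r, hr, rfl⟩ : p = 1 ∨ ∃ r, 1 ≤ r ∧ p = r + 1 :=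
    (eq_or_lt_of_le hp).imp Eq.symm fun h => ⟨p - 1, by omega, by omega⟩
  · simp [hΛ.1]
  rw [hΛ.2 y r hr, hΛ.2 1 r hr, mul_left_comm]
  congr 1
  rw [Finset.mul_sum]
  refine Finset.sum_congr rfl fun q hq => ?_
  rw [Finset.mem_Icc] at hq
  rw [ih q (by omega) hq.1, ih (r + 1 - q) (by omega) (by omega),
    ← pow_mul_pow_sub y (by omega : q ≤ r + 1)]
  ring

theorem one_pos (hΛ : IsLamSeq f Λ)
    (hpos : ∀ q : ℚ, (q : ℝ) ∈ Set.Icc (0:ℝ) 1 → 0 < f (q : ℝ) + f (1 - (q : ℝ)))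
    {p : ℕ} (hp : 1 ≤ p) : 0 < Λ 1 p := by
  induction p using Nat.strong_induction_on with
  | _ p ih =>
  obtain rfl | ⟨r, hr, rfl⟩ : p = 1 ∨ ∃ r, 1 ≤ r ∧ p = r + 1 :=
    (eq_or_lt_of_le hp).imp Eq.symm fun h => ⟨p - 1, by omega, by omega⟩
  · simp [hΛ.1]
  set T : ℕ → ℝ := fun q => Λ 1 q * Λ 1 (r + 1 - q)
  have hT_pos q (hq : q ∈ Finset.Icc 1 r) : 0 < T q := by
    rw [Finset.mem_Icc] at hq
    exact mul_pos (ih q (by omega) hq.1) (ih (r + 1 - q) (by omega) (by omega))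
  have hT_symm q (hq : q ∈ Finset.Icc 1 r) : T (r + 1 - q) = T q := by
    rw [Finset.mem_Icc] at hq
    simp only [T, Nat.sub_sub_self (by omega : q ≤ r + 1), mul_comm]
  have hreflect : ∑ q ∈ Finset.Icc 1 r, f ((q : ℝ) / (r + 1)) * T q
      = ∑ q ∈ Finset.Icc 1 r, f (1 - (q : ℝ) / (r + 1)) * T q := by
    rw [← Finset.sum_Icc_one_reflect]
    refine Finset.sum_congr rfl fun q hq => ?_
    rw [hT_symm q hq]
    congr 2
    rw [Finset.mem_Icc] at hq
    push_cast [Nat.cast_sub (by omega : q ≤ r + 1)]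
    field_simp
  have hsum_pos : 0 < ∑ q ∈ Finset.Icc 1 r, f ((q : ℝ) / (r + 1)) * T q := by
    suffices 0 < ∑ q ∈ Finset.Icc 1 r,
        (f ((q : ℝ) / (r + 1)) + f (1 - (q : ℝ) / (r + 1))) * T q by
      simp only [add_mul, Finset.sum_add_distrib, ← hreflect] at this
      linarith
    refine Finset.sum_pos (fun q hq => mul_pos ?_ (hT_pos q hq)) ⟨1, by simp [hr]⟩
    rw [Finset.mem_Icc] at hq
    have hmem : ((q / (r + 1) : ℚ) : ℝ) ∈ Set.Icc (0:ℝ) 1 := by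
      push_cast
      refine ⟨by positivity, (div_le_one (by positivity)).2 ?_⟩
      exact_mod_cast hq.2.trans (Nat.le_succ r)
    simpa using hpos _ hmem
  rw [hΛ.2 1 r hr]
  simp only [mul_assoc]
  exact mul_pos (by positivity) hsum_pos

theorem apply_eq_div_pow (hΛ : IsLamSeq f Λ)
    (hpos : ∀ q : ℚ, (q : ℝ) ∈ Set.Icc (0:ℝ) 1 → 0 < f (q : ℝ) + f (1 - (q : ℝ)))
    {a : ℕ → ℝ} (ha : ∀ p : ℕ, 1 ≤ p → a p = (Λ 1 p) ^ (-(1 : ℝ) / (p : ℝ)))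
    (y : ℝ) {p : ℕ} (hp : 1 ≤ p) : Λ y p = (y / a p) ^ p := by
  have ha_pow : a p ^ p = (Λ 1 p)⁻¹ := by
    rw [ha p hp, ← Real.rpow_natCast, ← Real.rpow_mul (hΛ.one_pos hpos hp).le,
      div_mul_cancel₀ _ (by positivity), Real.rpow_neg_one]
  rw [hΛ.apply_eq_pow_mul y hp, div_pow, ha_pow, div_inv_eq_mul]

end IsLamSeq

theorem stmt17_general (f : ℝ → ℝ)
    (hpos : ∀ q : ℚ, (q : ℝ) ∈ Set.Icc (0:ℝ) 1 → 0 < f (q : ℝ) + f (1 - (q : ℝ)))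
    (Λ : ℝ → ℕ → ℝ) (hΛ : IsLamSeq f Λ)
    (a : ℕ → ℝ) (ha : ∀ p : ℕ, 1 ≤ p → a p = (Λ 1 p) ^ (-(1 : ℝ) / (p : ℝ)))
    (A B δ : ℝ) (hB : 0 < B) (hδ : 0 < δ)
    (hineq : ∀ p : ℕ, 1 ≤ p →
      B ≤ a p ∧ |a (p + 1) - a p| ≤ A / (p : ℝ) ^ ((2 : ℝ) + δ)) :
    ∃ aInf : ℝ, Tendsto a atTop (nhds aInf) ∧ B ≤ aInf ∧
      Tendsto (fun p => Λ aInf p) atTop (nhds 1) := by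
  have hstep n :
      dist (a (n + 1)) (a (n + 1 + 1)) ≤ A / ((n : ℝ) + 1) ^ ((2 : ℝ) + δ) := by
    simpa [Real.dist_eq, abs_sub_comm] using (hineq (n + 1) n.succ_pos).2
  have hsummable :
      Summable fun n : ℕ => ((n : ℝ) + 1) * (A / ((n : ℝ) + 1) ^ ((2 : ℝ) + δ)) := by
    have hs : Summable fun n : ℕ => A * (1 / ((n + 1 : ℕ) : ℝ) ^ (1 + δ)) :=
      ((summable_nat_add_iff 1).2 (Real.summable_one_div_nat_rpow.2 (by linarith))).mul_left A
    refine hs.congr fun n => ?_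
    have hn : (0 : ℝ) < n + 1 := by positivity
    rw [show (2 : ℝ) + δ = 1 + δ + 1 by ring, Real.rpow_add_one hn.ne']
    push_cast
    field_simp
  obtain ⟨L, hconv, hrate⟩ := exists_tendsto_and_tendsto_succ_mul_dist hstep hsummable
  have hBL : B ≤ L :=
    ge_of_tendsto hconv (Eventually.of_forall fun n => (hineq (n + 1) n.succ_pos).1)
  refine ⟨L, (tendsto_add_atTop_iff_nat 1).1 hconv, hBL, (tendsto_add_atTop_iff_nat 1).1 ?_⟩
  have hpow := tendsto_div_pow_of_tendsto_mul_dist (k := fun n => n + 1) hB (hB.le.trans hBL)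
    (fun n => (hineq (n + 1) n.succ_pos).1) (by simpa using hrate)
  exact hpow.congr fun n => (hΛ.apply_eq_div_pow hpos ha L n.succ_pos).symm

theorem stmt17 (f : ℝ → ℝ) (hf : ContinuousOn f (Set.Icc 0 1))
    (hpos : ∀ q : ℚ, (q : ℝ) ∈ Set.Icc (0:ℝ) 1 → 0 < f (q : ℝ) + f (1 - (q : ℝ)))
    (Λ : ℝ → ℕ → ℝ) (hΛ : IsLamSeq f Λ)
    (a : ℕ → ℝ) (ha : ∀ p : ℕ, 1 ≤ p → a p = (Λ 1 p) ^ (-(1 : ℝ) / (p : ℝ)))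
    (A B δ : ℝ) (hA : 0 < A) (hB : 0 < B) (hδ : 0 < δ)
    (hineq : ∀ p : ℕ, 1 ≤ p →
      B ≤ a p ∧ |a (p + 1) - a p| ≤ A / (p : ℝ) ^ ((2 : ℝ) + δ)) :
    ∃ aInf : ℝ, Tendsto a atTop (nhds aInf) ∧ B ≤ aInf ∧
      Tendsto (fun p => Λ aInf p) atTop (nhds 1) :=
  stmt17_general f hpos Λ hΛ a ha A B δ hB hδ hineq
end
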